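/- For nonassociative words b₁, b₂, ..., b_k in P(X) ∪ {1}, the reduction π(b₁b₂⋯b_k b_{k-1}⋯b₁) of the left-normed symmetric word equals 1 if and only if π(b_k) = 1. -/
import Mathlib


inductive Wd (X : Type) : Type
  | one : Wd X
  | of : X → Wd X
  | mul : Wd X → Wd X → Wd X

namespace Wd

variable {X : Type}

/-- Product of possibly-empty words: the empty word `one` acts as identity;
otherwise the product is the formal (magma) product. -/
def cmul : Wd X → Wd X → Wd X
  | one, v => v
  | u, one => u
  | u, v => mul u v

/-- Number of letters of a word. -/
def len : Wd X → ℕ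
  | one => 0
  | of _ => 1
  | mul u v => len u + len v

/-- The set of subwords of a word. -/
def Sub : Wd X → Set (Wd X)
  | one => {one}
  | of x => {of x}
  | mul u v => insert (mul u v) (Sub u ∪ Sub v)

/-- `v ∈ W(X)`: `v` is an element of `P(X) ∪ {1}` (the empty word occurs only
as the whole word) having no subword of the form `uu` or `(uw)w`. -/
def InW (v : Wd X) : Prop :=
  (∀ w ∈ Sub v, w = one → v = one) ∧
  (∀ u : Wd X, mul u u ∉ Sub v) ∧
  (∀ u w : Wd X, mul (mul u w) w ∉ Sub v)

/-- Left-normed product of a list of words. -/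
def prodL : List (Wd X) → Wd X
  | [] => one
  | a :: l => l.foldl cmul a

/-- The left-normed symmetric word `b₁b₂⋯b_k b_{k-1}⋯b₁` built from `[b₁,…,b_k]`. -/
def symW (l : List (Wd X)) : Wd X := prodL (l ++ l.reverse.tail)

/-- `lpad a l` is the left-normed product `a·l₁⋯lₙ`, with the convention that
`1·l₁⋯lₙ` means `l₁⋯lₙ`. -/
def lpad (a : Wd X) (l : List (Wd X)) : Wd X :=
  match a with
  | one => prodL l
  | _ => prodL (a :: l)

/-- Specification of the reduction map `π : P(X) ∪ {1} → W(X)`. -/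
structure PiSpec (π : Wd X → Wd X) : Prop where
  map_one : π one = one
  map_of : ∀ x : X, π (of x) = of x
  mem_W : ∀ v, InW (π v)
  fix : ∀ v, InW v → π v = v
  cancel_sq : ∀ u, InW u → π (mul u u) = one
  cancel : ∀ a v, InW (mul a v) → π (mul (mul a v) v) = a
  keep : ∀ u v, InW u → InW v → InW (mul u v) → π (mul u v) = mul u v
  red : ∀ u v, π (mul u v) = π (cmul (π u) (π v))

end Wd

section Aux

open Wd

variable {X : Type} {p : Wd X → Wd X}

lemma sub_mul_left {u v : Wd X} : Sub u ⊆ Sub (Wd.mul u v) := by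
  intro w hw; simp [Wd.Sub]; tauto

lemma sub_mul_right {u v : Wd X} : Sub v ⊆ Sub (Wd.mul u v) := by
  intro w hw; simp [Wd.Sub]; tauto

lemma one_not_Sub_mul {u v : Wd X} (h : InW (Wd.mul u v)) :
    Wd.one ∉ Sub (Wd.mul u v) := by
  intro hm
  exact absurd (h.1 _ hm rfl) (by simp)

lemma inW_mul_left {u v : Wd X} (h : InW (Wd.mul u v)) : InW u := by
  refine ⟨?_, fun s hs => h.2.1 s (sub_mul_left hs),
    fun s w hw => h.2.2 s w (sub_mul_left hw)⟩
  intro w hw hwe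
  subst hwe
  exact absurd (sub_mul_left hw) (one_not_Sub_mul h)

lemma inW_mul_right {u v : Wd X} (h : InW (Wd.mul u v)) : InW v := by
  refine ⟨?_, fun s hs => h.2.1 s (sub_mul_right hs),
    fun s w hw => h.2.2 s w (sub_mul_right hw)⟩
  intro w hw hwe
  subst hwe
  exact absurd (sub_mul_right hw) (one_not_Sub_mul h)

lemma one_not_Sub {v : Wd X} (h : InW v) (hv : v ≠ Wd.one) : Wd.one ∉ Sub v :=
  fun hm => hv (h.1 _ hm rfl)

lemma mem_Sub_self : ∀ v : Wd X, v ∈ Sub v := by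
  intro v; cases v <;> simp [Wd.Sub]

lemma len_pos {v : Wd X} (h : InW v) (hv : v ≠ Wd.one) : 1 ≤ Wd.len v := by
  induction v with
  | one => exact absurd rfl hv
  | of x => simp [Wd.len]
  | mul u w ihu _ =>
    have hu : u ≠ Wd.one := by
      rintro rfl
      exact absurd (sub_mul_left (mem_Sub_self _)) (one_not_Sub h hv)
    have := ihu (inW_mul_left h) hu
    simp [Wd.len]; omega

lemma cmul_one_right : ∀ a : Wd X, Wd.cmul a Wd.one = a := by
  intro a; cases a <;> rfl

lemma cmul_one_left (a : Wd X) : Wd.cmul Wd.one a = a := by cases a <;> rfl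

lemma cmul_ne {a b : Wd X} (ha : a ≠ Wd.one) (hb : b ≠ Wd.one) :
    Wd.cmul a b = Wd.mul a b := by
  cases a <;> cases b <;> first | rfl | simp_all

/-- top-level composition lemma: if `u, v ∈ W`, nonempty, `u ≠ v` and
`u` does not end in `v`, then `uv ∈ W`. -/
lemma inW_mul {u v : Wd X} (hu : InW u) (hv : InW v) (hu1 : u ≠ Wd.one)
    (hv1 : v ≠ Wd.one) (hne : u ≠ v) (hav : ∀ a, u ≠ Wd.mul a v) :
    InW (Wd.mul u v) := by
  have h1u := one_not_Sub hu hu1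
  have h1v := one_not_Sub hv hv1
  refine ⟨?_, ?_, ?_⟩
  · intro w hw hwe
    subst hwe
    simp [Wd.Sub] at hw
    rcases hw with h | h
    · exact absurd h h1u
    · exact absurd h h1v
  · intro s hs
    simp [Wd.Sub] at hs
    rcases hs with h | h | h
    · obtain ⟨h1, h2⟩ := h
      exact hne (h1.symm.trans h2)
    · exact absurd h (hu.2.1 s)
    · exact absurd h (hv.2.1 s)
  · intro a w hw
    simp [Wd.Sub] at hw
    rcases hw with h | h | h
    · obtain ⟨h1, h2⟩ := h
      subst h2
      exact hav a h1.symm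
    · exact absurd h (hu.2.2 a w)
    · exact absurd h (hv.2.2 a w)

variable (hp : PiSpec p)
include hp

lemma pidem (a : Wd X) : p (p a) = p a := hp.fix _ (hp.mem_W a)

lemma pR (a b : Wd X) : p (Wd.cmul a b) = p (Wd.cmul (p a) (p b)) := by
  by_cases ha : a = Wd.one
  · subst ha
    rw [cmul_one_left, hp.map_one, cmul_one_left, pidem hp]
  by_cases hb : b = Wd.one
  · subst hb
    rw [cmul_one_right, hp.map_one, cmul_one_right, pidem hp]
  rw [cmul_ne ha hb, hp.red]

lemma pR' (a b : Wd X) :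
    p (Wd.cmul a (p b)) = p (Wd.cmul a b) := by
  rw [pR hp a (p b), pidem hp, ← pR hp]

/-- Right multiplication by a reduced word is an involution on `W`. -/
lemma pL {u v : Wd X} (hu : InW u) (hv : InW v) :
    p (Wd.cmul (p (Wd.cmul u v)) v) = u := by
  by_cases hv1 : v = Wd.one
  · subst hv1
    simp only [cmul_one_right]
    rw [pidem hp, hp.fix u hu]
  by_cases hu1 : u = Wd.one
  · subst hu1
    rw [cmul_one_left, hp.fix v hv, cmul_ne hv1 hv1, hp.cancel_sq v hv]
  rw [cmul_ne hu1 hv1]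
  by_cases heq : u = v
  · subst heq
    rw [hp.cancel_sq u hu, cmul_one_left, hp.fix u hu]
  by_cases hav : ∃ a, u = Wd.mul a v
  · obtain ⟨a, rfl⟩ := hav
    have ha1 : a ≠ Wd.one := by
      rintro rfl
      exact absurd (sub_mul_left (mem_Sub_self _)) (one_not_Sub hu hu1)
    rw [hp.cancel a v hu, cmul_ne ha1 hv1, hp.fix _ hu]
  · push_neg at hav
    have hW : InW (Wd.mul u v) := inW_mul hu hv hu1 hv1 heq hav
    rw [hp.fix _ hW, cmul_ne (by simp) hv1, hp.cancel u v hW]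

lemma psq (a : Wd X) : p (Wd.cmul a a) = Wd.one := by
  rw [pR hp]
  by_cases h : p a = Wd.one
  · rw [h, cmul_one_left, hp.map_one]
  · rw [cmul_ne h h, hp.cancel_sq _ (hp.mem_W a)]

/-- For reduced `u`, `v`: `π(uv) = u` iff `v = 1`. -/
lemma pN {u v : Wd X} (hu : InW u) (hv : InW v) :
    p (Wd.cmul u v) = u ↔ v = Wd.one := by
  constructor
  · intro h
    by_contra hv1
    have hlv : 1 ≤ Wd.len v := len_pos hv hv1
    by_cases hu1 : u = Wd.one
    · subst hu1
      rw [cmul_one_left, hp.fix v hv] at h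
      exact hv1 h
    rw [cmul_ne hu1 hv1] at h
    by_cases heq : u = v
    · subst heq
      rw [hp.cancel_sq u hu] at h
      exact hu1 h.symm
    by_cases hav : ∃ a, u = Wd.mul a v
    · obtain ⟨a, rfl⟩ := hav
      rw [hp.cancel a v hu] at h
      have : Wd.len a = Wd.len a + Wd.len v := by
        conv_lhs => rw [h]
        simp [Wd.len]
      omega
    · push_neg at hav
      have hW : InW (Wd.mul u v) := inW_mul hu hv hu1 hv1 heq hav
      rw [hp.fix _ hW] at h
      have : Wd.len u + Wd.len v = Wd.len u := by
        conv_lhs => rw [show Wd.len u + Wd.len v = Wd.len (Wd.mul u v) from rfl, h]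
      omega
  · rintro rfl
    rw [cmul_one_right, hp.fix u hu]

lemma pInj {s t : Wd X} (hs : InW s) (ht : InW t) (c : Wd X)
    (h : p (Wd.cmul s c) = p (Wd.cmul t c)) : s = t := by
  have h2 : p (Wd.cmul s (p c)) = p (Wd.cmul t (p c)) := by
    rw [pR' hp s c, pR' hp t c]; exact h
  calc s = p (Wd.cmul (p (Wd.cmul s (p c))) (p c)) := (pL hp hs (hp.mem_W c)).symm
    _ = p (Wd.cmul (p (Wd.cmul t (p c))) (p c)) := by rw [h2]
    _ = t := pL hp ht (hp.mem_W c)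

lemma pF : ∀ (l : List (Wd X)) (a : Wd X),
    p (List.foldl Wd.cmul a l) = p (List.foldl Wd.cmul (p a) l) := by
  intro l
  induction l with
  | nil => intro a; simp [pidem hp]
  | cons c l ih =>
    intro a
    have key : p (Wd.cmul a c) = p (Wd.cmul (p a) c) := by
      rw [pR hp a c, pR' hp]
    simp only [List.foldl_cons]
    rw [ih (Wd.cmul a c), key, ← ih (Wd.cmul (p a) c)]

lemma pFapp (l₁ l₂ : List (Wd X)) (a : Wd X) :
    p (List.foldl Wd.cmul a (l₁ ++ l₂)) =
      p (List.foldl Wd.cmul (p (List.foldl Wd.cmul a l₁)) l₂) := by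
  rw [List.foldl_append]; exact pF hp l₂ _

lemma pChain : ∀ (l : List (Wd X)) {s t : Wd X}, InW s → InW t →
    (p (List.foldl Wd.cmul s l) = p (List.foldl Wd.cmul t l) ↔ s = t) := by
  intro l
  induction l with
  | nil =>
    intro s t hs ht
    rw [List.foldl_nil, List.foldl_nil, hp.fix s hs, hp.fix t ht]
  | cons c l ih =>
    intro s t hs ht
    simp only [List.foldl_cons]
    rw [pF hp l (Wd.cmul s c), pF hp l (Wd.cmul t c)]
    rw [ih (hp.mem_W _) (hp.mem_W _)]
    constructor
    · exact pInj hp hs ht c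
    · rintro rfl; rfl

lemma pC : ∀ (l : List (Wd X)) (a : Wd X),
    p (List.foldl Wd.cmul a (l ++ l.reverse)) = p a := by
  intro l
  induction l with
  | nil => intro a; rfl
  | cons c l ih =>
    intro a
    have : (c :: l) ++ (c :: l).reverse = c :: ((l ++ l.reverse) ++ [c]) := by
      simp
    rw [this]
    simp only [List.foldl_cons]
    rw [pFapp hp (l ++ l.reverse) [c] (Wd.cmul a c), ih (Wd.cmul a c)]
    show p (Wd.cmul (p (Wd.cmul a c)) c) = p a
    have h1 : p (Wd.cmul a c) = p (Wd.cmul (p a) (p c)) := pR hp a c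
    rw [← pR' hp, h1]
    exact pL hp (hp.mem_W a) (hp.mem_W c)

end Aux


open Wd in
/-- `π(b₁b₂⋯b_k b_{k-1}⋯b₁) = 1` if and only if `π(b_k) = 1`. -/
theorem pi_symW_eq_one_iff {X : Type} (π : Wd X → Wd X) (hπ : PiSpec π)
    (bs : List (Wd X)) (hbs : bs ≠ []) :
    π (symW bs) = Wd.one ↔ π (bs.getLast hbs) = Wd.one := by
  rcases List.eq_nil_or_concat bs with rfl | ⟨fr, b, hfr⟩
  · exact absurd rfl hbs
  rw [List.concat_eq_append] at hfr
  subst hfr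
  rw [show (fr ++ [b]).getLast hbs = b from List.getLast_append _]
  have hrev : (fr ++ [b]).reverse.tail = fr.reverse := by
    simp
  cases fr with
  | nil =>
    simp only [symW, hrev]
    rfl
  | cons a t =>
    have hword : symW ((a :: t) ++ [b]) =
        List.foldl Wd.cmul a ((t ++ [b]) ++ (t.reverse ++ [a])) := by
      simp only [symW, hrev]
      simp [prodL]
    rw [hword]
    set u := π (List.foldl Wd.cmul a t) with hu_def
    have hu : InW u := hπ.mem_W _
    have step1 : π (List.foldl Wd.cmul a ((t ++ [b]) ++ (t.reverse ++ [a]))) =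
        π (List.foldl Wd.cmul (π (Wd.cmul u b)) (t.reverse ++ [a])) := by
      rw [pFapp hπ (t ++ [b]) (t.reverse ++ [a]) a, pFapp hπ t [b] a]
      rfl
    have step2 : π (List.foldl Wd.cmul u (t.reverse ++ [a])) = Wd.one := by
      have e1 : π (List.foldl Wd.cmul a (t ++ (t.reverse ++ [a]))) =
          π (List.foldl Wd.cmul u (t.reverse ++ [a])) := by
        rw [pFapp hπ t (t.reverse ++ [a]) a]
      have e2 : π (List.foldl Wd.cmul a (t ++ (t.reverse ++ [a]))) = Wd.one := by
        rw [← List.append_assoc, pFapp hπ (t ++ t.reverse) [a] a, pC hπ]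
        show π (Wd.cmul (π a) a) = Wd.one
        rw [pR hπ (π a) a, pidem hπ, ← pR hπ]
        exact psq hπ a
      rw [← e1, e2]
    rw [step1]
    have h3 : π (List.foldl Wd.cmul (π (Wd.cmul u b)) (t.reverse ++ [a])) = Wd.one ↔
        π (Wd.cmul u b) = u := by
      rw [← step2, pChain hπ (t.reverse ++ [a]) (hπ.mem_W _) hu]
    rw [h3, ← pR' hπ u b]
    exact pN hπ hu (hπ.mem_W b)
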